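/- arXiv:2408.11213 — 2 statements merged into one kernel-verified Lean document; each statement's English description precedes it below -/
import Mathlib

section
/- Every finite union-closed family 𝓕 of finite sets in which every element a ∈ U(𝓕) admits an a-problematic set is independent. -/
variable {α : Type*} [DecidableEq α]

/-- The universe `U(𝓕)` of a finite family of finite sets: the union of its members. -/
def famUniv (F : Finset (Finset α)) : Finset α := F.sup id

/-- `𝓕` is union-closed. -/
def unionClosed (F : Finset (Finset α)) : Prop := ∀ A ∈ F, ∀ B ∈ F, A ∪ B ∈ F

/-- `𝓕` is independent: for every `a ∈ U(𝓕)` and every `S ⊆ U(𝓕) \ {a}`, either some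
member of `𝓕` avoiding `a` meets `S`, or some member of `𝓕` containing `a` misses `S`. -/
def independent (F : Finset (Finset α)) : Prop :=
  ∀ a ∈ famUniv F, ∀ S ⊆ famUniv F \ {a},
    (∃ O ∈ F, a ∉ O ∧ (O ∩ S).Nonempty) ∨ (∃ O ∈ F, a ∈ O ∧ O ∩ S = ∅)

theorem stmt6 (F : Finset (Finset α)) (huc : unionClosed F)
    (hprob : ∀ a ∈ famUniv F, ∃ O ∈ F, a ∉ O ∧ O ∪ {a} ∈ F) :
    independent F := by
  intro a ha S hS
  obtain ⟨O, hOF, haO, hOa⟩ := hprob a ha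
  rcases (O ∩ S).eq_empty_or_nonempty with he | hne
  · right
    refine ⟨O ∪ {a}, hOa, by simp, ?_⟩
    have haS : a ∉ S := by
      intro h
      have := hS h
      simp at this
    rw [Finset.union_inter_distrib_right, he]
    simp [Finset.singleton_inter_of_notMem haS]
  · left; exact ⟨O, hOF, haO, hne⟩
end

section
/- Let 𝓝 be an n-normalized family, let a_𝓝 be the unique element of U(𝓝) belonging to every non-empty set of 𝓝, and let M be any minimal non-empty set of 𝓝 (minimal under inclusion among the non-empty members of 𝓝). Then the family 𝓝' = (𝓝 \ {M}) ⊖ {a_𝓝} is (n−1)-normalized. -/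
variable {α : Type*} [DecidableEq α]

/-- `𝓕_a = {F ∈ 𝓕 : a ∈ F}`. -/
def famAt (F : Finset (Finset α)) (a : α) : Finset (Finset α) := F.filter (fun X => a ∈ X)

/-- `𝓕` is separating if `𝓕_a ≠ 𝓕_b` for all distinct `a, b ∈ U(𝓕)`. -/
def separating (F : Finset (Finset α)) : Prop :=
  ∀ a ∈ famUniv F, ∀ b ∈ famUniv F, a ≠ b → famAt F a ≠ famAt F b

/-- `𝓕` is normalized: separating, union-closed, `∅ ∈ 𝓕` and `|𝓕| = |U(𝓕)| + 1`. -/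
def normalized (F : Finset (Finset α)) : Prop :=
  separating F ∧ unionClosed F ∧ ∅ ∈ F ∧ F.card = (famUniv F).card + 1

/-- `𝓕 ⊖ {a} = {F \ {a} : F ∈ 𝓕}`. -/
def famErase (F : Finset (Finset α)) (a : α) : Finset (Finset α) :=
  F.image (fun X => X.erase a)

lemma mem_famUniv {F : Finset (Finset α)} {b : α} :
    b ∈ famUniv F ↔ ∃ X ∈ F, b ∈ X := by
  simp [famUniv, Finset.mem_sup]

lemma sup_mem_of_unionClosed {F : Finset (Finset α)} (hF : unionClosed F)
    (h0 : ∅ ∈ F) : ∀ S : Finset (Finset α), S ⊆ F → S.sup id ∈ F := by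
  intro S
  induction S using Finset.induction_on with
  | empty => intro _; simpa using h0
  | @insert X S _ ih =>
      intro hS
      rw [Finset.sup_insert]
      have h1 : X ∈ F := hS (Finset.mem_insert_self _ _)
      have h2 : S.sup id ∈ F := ih (fun Y hY => hS (Finset.mem_insert_of_mem hY))
      simpa [Finset.sup_eq_union] using hF X h1 _ h2

/-- The core contradiction: if `b ∈ M`, `c ∉ M` but `b` and `c` agree on every member
other than `M`, we get a contradiction with separation. -/
lemma core {N : Finset (Finset α)} (hsep : separating N) (huc : unionClosed N)
    (h0 : ∅ ∈ N) {a : α} (ha : a ∈ famUniv N)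
    (haAll : ∀ X ∈ N, X ≠ ∅ → a ∈ X)
    {M : Finset α} (hM : M ∈ N)
    (hMmin : ∀ X ∈ N, X ≠ ∅ → X ⊆ M → X = M)
    {b c : α} (hbU : b ∈ famUniv N) (hba : b ≠ a)
    (hbM : b ∈ M) (hcM : c ∉ M)
    (heq : ∀ X ∈ N, X ≠ M → (b ∈ X ↔ c ∈ X)) : False := by
  set T := (N.filter (fun X => c ∉ X)).sup id with hTdef
  have hTN : T ∈ N := sup_mem_of_unionClosed huc h0 _ (Finset.filter_subset _ _)
  have hcT : c ∉ T := by
    rw [hTdef]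
    intro h
    obtain ⟨X, hX, hcX⟩ := Finset.mem_sup.1 h
    exact (Finset.mem_filter.1 hX).2 hcX
  have hMT : M ⊆ T := by
    have : M ≤ (N.filter (fun X => c ∉ X)).sup id :=
      Finset.le_sup (f := id) (Finset.mem_filter.2 ⟨hM, hcM⟩)
    exact this
  by_cases hTM : T = M
  · have hfa : famAt N a = famAt N b := by
      unfold famAt
      apply Finset.filter_congr
      intro X hX
      constructor
      · intro haX
        by_cases hXM : X = M
        · subst hXM; exact hbM
        · have hcX : c ∈ X := by
            by_contra hcX
            have hXT : X ⊆ T :=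
              Finset.le_sup (f := id) (Finset.mem_filter.2 ⟨hX, hcX⟩)
            rw [hTM] at hXT
            exact hXM (hMmin X hX (Finset.ne_empty_of_mem haX) hXT)
          exact (heq X hX hXM).2 hcX
      · intro hbX
        exact haAll X hX (Finset.ne_empty_of_mem hbX)
    exact hsep a ha b hbU (Ne.symm hba) hfa
  · exact hcT ((heq T hTN hTM).1 (hMT hbM))

theorem stmt16 (n : ℕ) (N : Finset (Finset α))
    (hnorm : normalized N) (hn : (famUniv N).card = n)
    (a : α) (ha : a ∈ famUniv N) (haAll : ∀ X ∈ N, X ≠ ∅ → a ∈ X)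
    (M : Finset α) (hM : M ∈ N) (hMne : M ≠ ∅)
    (hMmin : ∀ X ∈ N, X ≠ ∅ → X ⊆ M → X = M) :
    normalized (famErase (N.erase M) a) ∧
      (famUniv (famErase (N.erase M) a)).card = n - 1 := by
  obtain ⟨hsep, huc, h0, hcard⟩ := hnorm
  have haM : a ∈ M := haAll M hM hMne
  set N' := famErase (N.erase M) a with hN'def
  have hmemN' : ∀ Z, Z ∈ N' ↔ ∃ Y ∈ N.erase M, Y.erase a = Z := by
    intro Z; simp [hN'def, famErase]
  -- if X ∈ N \ {M} has X.erase a = ∅ then X = ∅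
  have hempty : ∀ X ∈ N.erase M, X.erase a = ∅ → X = ∅ := by
    intro X hX hXe
    by_contra hXne
    have hXN := Finset.mem_of_mem_erase hX
    have haX : a ∈ X := haAll X hXN hXne
    have hXsing : X = {a} := by
      apply Finset.Subset.antisymm
      · intro x hx
        rcases eq_or_ne x a with h | h
        · simp [h]
        · exact absurd (Finset.mem_erase.2 ⟨h, hx⟩) (by simp [hXe])
      · simpa using haX
    have : X = M := hMmin X hXN hXne (by rw [hXsing]; simpa using haM)
    exact Finset.ne_of_mem_erase hX this
  -- injectivity of erasing `a` on N \ {M}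
  have hinj : ∀ X ∈ N.erase M, ∀ Y ∈ N.erase M, X.erase a = Y.erase a → X = Y := by
    intro X hX Y hY hXY
    by_cases hXe : X.erase a = ∅
    · rw [hempty X hX hXe, hempty Y hY (by rw [← hXY]; exact hXe)]
    · have hXne : X ≠ ∅ := by
        intro h; exact hXe (by simp [h])
      have hYne : Y ≠ ∅ := by
        intro h; rw [h] at hXY; exact hXe (by simp [hXY])
      have haX : a ∈ X := haAll X (Finset.mem_of_mem_erase hX) hXne
      have haY : a ∈ Y := haAll Y (Finset.mem_of_mem_erase hY) hYne
      rw [← Finset.insert_erase haX, ← Finset.insert_erase haY, hXY]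
  have hUN : famUniv N ∈ N := sup_mem_of_unionClosed huc h0 N (Finset.Subset.refl N)
  have hXU : ∀ X ∈ N, X ⊆ famUniv N := by
    intro X hX x hx
    exact mem_famUniv.2 ⟨X, hX, hx⟩
  -- the universe of N' is U(N) \ {a}
  have hU' : famUniv N' = (famUniv N).erase a := by
    apply Finset.Subset.antisymm
    · intro x hx
      obtain ⟨Z, hZ, hxZ⟩ := mem_famUniv.1 hx
      obtain ⟨Y, hY, rfl⟩ := (hmemN' Z).1 hZ
      obtain ⟨hxa, hxY⟩ := Finset.mem_erase.1 hxZ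
      exact Finset.mem_erase.2 ⟨hxa, hXU Y (Finset.mem_of_mem_erase hY) hxY⟩
    · intro x hx
      obtain ⟨hxa, hxU⟩ := Finset.mem_erase.1 hx
      by_cases hUM : famUniv N = M
      · -- then N ⊆ {∅, M}, so |U(N)| ≤ 1, so U(N) = {a}, contradiction with x ≠ a
        exfalso
        have hsub : N ⊆ {∅, M} := by
          intro X hX
          rcases eq_or_ne X ∅ with h | h
          · simp [h]
          · have : X = M := hMmin X hX h (hUM ▸ hXU X hX)
            simp [this]
        have hc2 : N.card ≤ 2 :=
          (Finset.card_le_card hsub).trans ((Finset.card_insert_le _ _).trans (by simp))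
        have hU1 : (famUniv N).card ≤ 1 := by omega
        have : famUniv N = {a} := by
          apply Finset.eq_singleton_iff_unique_mem.2
          refine ⟨ha, fun y hy => ?_⟩
          by_contra hya
          have : ({y, a} : Finset α) ⊆ famUniv N := by
            intro z hz
            rcases Finset.mem_insert.1 hz with h | h
            · exact h ▸ hy
            · exact (Finset.mem_singleton.1 h) ▸ ha
          have := Finset.card_le_card this
          rw [Finset.card_insert_of_notMem (by simp [hya])] at this
          simp at this
          omega
        rw [this] at hxU
        exact hxa (Finset.mem_singleton.1 hxU)
      · have hUmem : famUniv N ∈ N.erase M := Finset.mem_erase.2 ⟨hUM, hUN⟩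
        have : (famUniv N).erase a ∈ N' := (hmemN' _).2 ⟨_, hUmem, rfl⟩
        exact mem_famUniv.2 ⟨_, this, Finset.mem_erase.2 ⟨hxa, hxU⟩⟩
  have hn1 : 1 ≤ n := by
    rw [← hn]
    exact Finset.card_pos.2 ⟨a, ha⟩
  have hcardU' : (famUniv N').card = n - 1 := by
    rw [hU', Finset.card_erase_of_mem ha, hn]
  have hcardN' : N'.card = n := by
    have h1 : N'.card = (N.erase M).card := by
      apply Finset.card_image_of_injOn
      intro X hX Y hY h
      exact hinj X hX Y hY h
    rw [h1, Finset.card_erase_of_mem hM, hcard, hn]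
    omega
  -- separation for N'
  have hsep' : separating N' := by
    intro b hb c hc hbc hfa
    obtain ⟨hba, hbU⟩ := Finset.mem_erase.1 (hU' ▸ hb)
    obtain ⟨hca, hcU⟩ := Finset.mem_erase.1 (hU' ▸ hc)
    -- b and c agree on every member of N other than M
    have hiff : ∀ X ∈ N, X ≠ M → (b ∈ X ↔ c ∈ X) := by
      intro X hX hXM
      have hXe : X.erase a ∈ N' := (hmemN' _).2 ⟨X, Finset.mem_erase.2 ⟨hXM, hX⟩, rfl⟩
      constructor
      · intro hbX
        have : X.erase a ∈ famAt N' b :=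
          Finset.mem_filter.2 ⟨hXe, Finset.mem_erase.2 ⟨hba, hbX⟩⟩
        rw [hfa] at this
        exact Finset.mem_of_mem_erase (Finset.mem_filter.1 this).2
      · intro hcX
        have : X.erase a ∈ famAt N' c :=
          Finset.mem_filter.2 ⟨hXe, Finset.mem_erase.2 ⟨hca, hcX⟩⟩
        rw [← hfa] at this
        exact Finset.mem_of_mem_erase (Finset.mem_filter.1 this).2
    have hneq : famAt N b ≠ famAt N c := hsep b hbU c hcU hbc
    have hMxor : ¬ (b ∈ M ↔ c ∈ M) := by
      intro h
      apply hneq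
      unfold famAt
      apply Finset.filter_congr
      intro X hX
      by_cases hXM : X = M
      · subst hXM; simpa using h
      · simpa using hiff X hX hXM
    by_cases hbM : b ∈ M
    · have hcM : c ∉ M := fun h => hMxor ⟨fun _ => h, fun _ => hbM⟩
      exact core hsep huc h0 ha haAll hM hMmin hbU hba hbM hcM hiff
    · have hcM : c ∈ M := by
        by_contra h
        exact hMxor ⟨fun h' => absurd h' hbM, fun h' => absurd h' h⟩
      exact core hsep huc h0 ha haAll hM hMmin hcU hca hcM hbM
        (fun X hX hXM => (hiff X hX hXM).symm)
  have huc' : unionClosed N' := by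
    intro A hA B hB
    obtain ⟨X, hX, rfl⟩ := (hmemN' A).1 hA
    obtain ⟨Y, hY, rfl⟩ := (hmemN' B).1 hB
    have hXY : X ∪ Y ∈ N := huc X (Finset.mem_of_mem_erase hX) Y (Finset.mem_of_mem_erase hY)
    have hXYM : X ∪ Y ≠ M := by
      intro h
      have hXM : X ⊆ M := h ▸ Finset.subset_union_left
      have hYM : Y ⊆ M := h ▸ Finset.subset_union_right
      have hXe : X = ∅ := by
        by_contra h'
        exact Finset.ne_of_mem_erase hX (hMmin X (Finset.mem_of_mem_erase hX) h' hXM)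
      have hYe : Y = ∅ := by
        by_contra h'
        exact Finset.ne_of_mem_erase hY (hMmin Y (Finset.mem_of_mem_erase hY) h' hYM)
      rw [hXe, hYe] at h
      exact hMne (h.symm ▸ (by simp))
    have : (X ∪ Y).erase a ∈ N' :=
      (hmemN' _).2 ⟨X ∪ Y, Finset.mem_erase.2 ⟨hXYM, hXY⟩, rfl⟩
    rwa [Finset.erase_union_distrib] at this
  have h0' : ∅ ∈ N' := by
    refine (hmemN' _).2 ⟨∅, Finset.mem_erase.2 ⟨Ne.symm hMne, h0⟩, by simp⟩
  refine ⟨⟨hsep', huc', h0', ?_⟩, hcardU'⟩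
  rw [hcardN', hcardU']
  omega
end
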